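/- arXiv:2305.05897 — 2 statements merged into one kernel-verified Lean document; each statement's English description precedes it below -/
import Mathlib

section
/- Let x, z : ℝ → ℝ be twice differentiable at a with G(a) = x'(a)² + z'(a)² > 0, and suppose the signed curvature of the generating curve vanishes at a, i.e. x'(a) z''(a) − x''(a) z'(a) = 0. Then for every u the map v ↦ N(u,v) has vanishing derivative at v = a; in other words, every component of the Gauss map N satisfies the Neumann boundary condition along the boundary circle {φ(u,a) : u ∈ [0,2π]} of the domain Σ_{a,b} = {φ(u,v) : u ∈ [0,2π], v ∈ [a,b]}, whose outward unit conormal at that circle is proportional to φ_v(u,a). -/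
/-!
Writing `n(v) = (z'(v) cos u, z'(v) sin u, -x'(v))`, the Gauss map is `N = n / ‖n‖`. The
derivative of a normalized curve `n / ‖n‖` is the part of `n'` orthogonal to `n`, divided by
`‖n‖`. Vanishing curvature at `a` says that `(x'', z'')` is parallel to `(x', z')` there, hence
`n'(a)` is parallel to `n(a)` and the derivative of `N` vanishes.
-/

open Real

noncomputable def vec3 (a b c : ℝ) : EuclideanSpace ℝ (Fin 3) :=
  (WithLp.equiv 2 (Fin 3 → ℝ)).symm ![a, b, c]

theorem norm_vec3 (a b c : ℝ) : ‖vec3 a b c‖ = √(a ^ 2 + b ^ 2 + c ^ 2) := by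
  simp [vec3, EuclideanSpace.norm_eq, Fin.sum_univ_three, add_assoc]

theorem smul_vec3 (r a b c : ℝ) : r • vec3 a b c = vec3 (r * a) (r * b) (r * c) := by
  ext i; fin_cases i <;> simp [vec3]

theorem vec3_eq_sum (a b c : ℝ) :
    vec3 a b c = a • vec3 1 0 0 + b • vec3 0 1 0 + c • vec3 0 0 1 := by
  ext i; fin_cases i <;> simp [vec3]

theorem HasDerivAt.vec3 {f g h : ℝ → ℝ} {f' g' h' a : ℝ} (hf : HasDerivAt f f' a)
    (hg : HasDerivAt g g' a) (hh : HasDerivAt h h' a) :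
    HasDerivAt (fun v => vec3 (f v) (g v) (h v)) (vec3 f' g' h') a := by
  simp only [vec3_eq_sum f', vec3_eq_sum (f _)]
  exact ((hf.smul_const _).add (hg.smul_const _)).add (hh.smul_const _)

theorem hasDerivAt_inv_norm_smul_self_of_deriv_eq_smul {E : Type*} [NormedAddCommGroup E]
    [InnerProductSpace ℝ E] {n : ℝ → E} {c a : ℝ} (hn : HasDerivAt n (c • n a) a)
    (h0 : n a ≠ 0) : HasDerivAt (fun v => ‖n v‖⁻¹ • n v) 0 a := by
  have hpos : 0 < ‖n a‖ := norm_pos_iff.2 h0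
  have hnorm : HasDerivAt (fun v => ‖n v‖) (c * ‖n a‖) a := by
    have := hn.norm_sq.sqrt (by positivity)
    simp only [sqrt_sq (norm_nonneg _), real_inner_smul_right, real_inner_self_eq_norm_sq] at this
    convert this using 1
    field_simp
  refine ((hnorm.inv hpos.ne').smul hn).congr_deriv ?_
  rw [smul_smul, ← add_smul, Pi.inv_apply]
  convert zero_smul ℝ (n a)
  field_simp
  ring

theorem exists_eq_mul_of_mul_sub_mul_eq_zero {X Z X' Z' : ℝ} (h0 : X ^ 2 + Z ^ 2 ≠ 0)
    (h : X * Z' - X' * Z = 0) : ∃ c, X' = c * X ∧ Z' = c * Z := by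
  refine ⟨(X * X' + Z * Z') / (X ^ 2 + Z ^ 2), ?_, ?_⟩ <;> field_simp
  · linear_combination (-Z) * h
  · linear_combination X * h

theorem statement_5_general (x z : ℝ → ℝ) (a : ℝ)
    (hx' : DifferentiableAt ℝ (deriv x) a)
    (hz' : DifferentiableAt ℝ (deriv z) a)
    (hG : 0 < (deriv x a) ^ 2 + (deriv z a) ^ 2)
    (hcurv : deriv x a * deriv (deriv z) a - deriv (deriv x) a * deriv z a = 0) :
    ∀ u : ℝ, HasDerivAt
      (fun v => (Real.sqrt ((deriv x v) ^ 2 + (deriv z v) ^ 2))⁻¹ •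
        vec3 (deriv z v * cos u) (deriv z v * sin u) (-(deriv x v)))
      0 a := by
  intro u
  set n := fun v => vec3 (deriv z v * cos u) (deriv z v * sin u) (-(deriv x v))
  have norm_n (v : ℝ) : ‖n v‖ = √((deriv x v) ^ 2 + (deriv z v) ^ 2) := by
    rw [norm_vec3]; congr 1; linear_combination (deriv z v) ^ 2 * sin_sq_add_cos_sq u
  obtain ⟨c, hx'', hz''⟩ := exists_eq_mul_of_mul_sub_mul_eq_zero hG.ne' hcurv
  have hn : HasDerivAt n (c • n a) a := by
    refine ((hz'.hasDerivAt.mul_const (cos u)).vec3 (hz'.hasDerivAt.mul_const (sin u))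
      hx'.hasDerivAt.neg).congr_deriv ?_
    rw [smul_vec3, hx'', hz'']; congr 1 <;> ring
  have h0 : n a ≠ 0 := by
    rw [← norm_pos_iff, norm_n]; exact sqrt_pos.2 hG
  simpa only [norm_n] using hasDerivAt_inv_norm_smul_self_of_deriv_eq_smul hn h0

/-- For the surface of revolution φ(u,v) = (x(v) cos u, x(v) sin u, z(v)) with Gauss map
`N(u,v) = G(v)^{−1/2}·(z'(v) cos u, z'(v) sin u, −x'(v))`, `G(v) = x'(v)² + z'(v)²`: if `x, z`
are twice differentiable at `a`, `G(a) > 0`, and the signed curvature of the generating curve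
vanishes at `a` (i.e. `x'(a) z''(a) − x''(a) z'(a) = 0`), then for every `u` the map
`v ↦ N(u,v)` has vanishing derivative at `v = a`; i.e. every component of the Gauss map
satisfies the Neumann boundary condition along the boundary circle `{φ(u,a)}` of the domain
`Σ_{a,b}`, whose outward unit conormal there is proportional to `φ_v(u,a)`. -/
theorem statement_5 (x z : ℝ → ℝ) (a : ℝ)
    (hx : DifferentiableAt ℝ x a) (hx' : DifferentiableAt ℝ (deriv x) a)
    (hz : DifferentiableAt ℝ z a) (hz' : DifferentiableAt ℝ (deriv z) a)
    (hG : 0 < (deriv x a) ^ 2 + (deriv z a) ^ 2)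
    (hcurv : deriv x a * deriv (deriv z) a - deriv (deriv x) a * deriv z a = 0) :
    ∀ u : ℝ, HasDerivAt
      (fun v => (Real.sqrt ((deriv x v) ^ 2 + (deriv z v) ^ 2))⁻¹ •
        vec3 (deriv z v * cos u) (deriv z v * sin u) (-(deriv x v)))
      0 a :=
  statement_5_general x z a hx' hz' hG hcurv
end

section
/- Fix real parameters 0 < α < γ and define μ, β, δ, k, x, z as in the unduloid setup. Then x and z are differentiable on ℝ and the generating curve of the unduloid is parametrized by arc length: x'(v)² + z'(v)² = 1 for every v ∈ ℝ. -/
/-!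
Both integrands of `F` and `E` are continuous, so the fundamental theorem of calculus
differentiates `z`. With `φ = μv/2 − π/4` one has `sin² φ = (1 − sin μv)/2`, and the choice of
`k` makes `√(1 − k² sin² φ) = x/γ`. Hence `z' = (μ/2)(αγ + x²)/x` and `x' = βμ cos(μv)/(2x)`,
and `x'² + z'² = 1` reduces to the polynomial identity
`β² cos² + (αγ + x²)² = 2(αγ + δ) x²`, which holds because `δ² − β² = α²γ²`,
together with `μ²(αγ + δ) = μ²(α + γ)²/2 = 2`.
-/

open Real

/-- The incomplete elliptic integral of the first kind,
`F(φ, k) = ∫₀^φ (1 − k² sin²θ)^{−1/2} dθ`. -/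
noncomputable def ellipticF (k φ : ℝ) : ℝ :=
  ∫ θ in (0:ℝ)..φ, (Real.sqrt (1 - k ^ 2 * Real.sin θ ^ 2))⁻¹

/-- The incomplete elliptic integral of the second kind,
`E(φ, k) = ∫₀^φ (1 − k² sin²θ)^{1/2} dθ`. -/
noncomputable def ellipticE (k φ : ℝ) : ℝ :=
  ∫ θ in (0:ℝ)..φ, Real.sqrt (1 - k ^ 2 * Real.sin θ ^ 2)

lemma one_sub_sq_mul_sin_sq_pos {k : ℝ} (hk : k ^ 2 < 1) (θ : ℝ) :
    0 < 1 - k ^ 2 * sin θ ^ 2 := by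
  nlinarith [sin_sq_le_one θ, sq_nonneg k]

lemma hasDerivAt_ellipticE (k φ : ℝ) :
    HasDerivAt (ellipticE k) (√(1 - k ^ 2 * sin φ ^ 2)) φ := by
  have hc : Continuous fun θ => √(1 - k ^ 2 * sin θ ^ 2) := by fun_prop
  exact intervalIntegral.integral_hasDerivAt_right (hc.intervalIntegrable _ _)
    (hc.stronglyMeasurableAtFilter _ _) hc.continuousAt

lemma hasDerivAt_ellipticF {k : ℝ} (hk : k ^ 2 < 1) (φ : ℝ) :
    HasDerivAt (ellipticF k) (√(1 - k ^ 2 * sin φ ^ 2))⁻¹ φ := by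
  have hc : Continuous fun θ => (√(1 - k ^ 2 * sin θ ^ 2))⁻¹ :=
    (by fun_prop : Continuous fun θ => √(1 - k ^ 2 * sin θ ^ 2)).inv₀
      fun θ => (sqrt_pos.mpr (one_sub_sq_mul_sin_sq_pos hk θ)).ne'
  exact intervalIntegral.integral_hasDerivAt_right (hc.intervalIntegrable _ _)
    (hc.stronglyMeasurableAtFilter _ _) hc.continuousAt

lemma sin_sq_half_sub_pi_div_four (t : ℝ) : sin (t / 2 - π / 4) ^ 2 = (1 - sin t) / 2 := by
  rw [sin_sq_eq_half_sub, show 2 * (t / 2 - π / 4) = t - π / 2 by ring, cos_sub_pi_div_two]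
  ring

lemma mul_sin_add_pos {β δ : ℝ} (hβδ : |β| < δ) (t : ℝ) : 0 < β * sin t + δ := by
  have := mul_le_of_le_one_right (abs_nonneg β) (abs_sin_le_one t)
  linarith [neg_abs_le (β * sin t), abs_mul β (sin t)]

lemma hasDerivAt_sqrt_mul_sin_add {β δ : ℝ} (hβδ : |β| < δ) (μ v : ℝ) :
    HasDerivAt (fun v => √(β * sin (μ * v) + δ))
      (β * μ * cos (μ * v) / (2 * √(β * sin (μ * v) + δ))) v := by
  have hpos := mul_sin_add_pos hβδ (μ * v)
  have hlin : HasDerivAt (fun v => β * sin (μ * v) + δ) (β * μ * cos (μ * v)) v := by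
    refine ((((hasDerivAt_id v).const_mul μ).sin.const_mul β).add_const δ).congr_deriv ?_
    simp only [id, mul_one]
    ring
  exact hlin.sqrt hpos.ne'

lemma hasDerivAt_elliptic_combination {k : ℝ} (hk : k ^ 2 < 1) (a b μ c v : ℝ) :
    HasDerivAt (fun v => a * ellipticF k (μ * v / 2 - c) + b * ellipticE k (μ * v / 2 - c))
      (μ / 2 * (a / √(1 - k ^ 2 * sin (μ * v / 2 - c) ^ 2) +
        b * √(1 - k ^ 2 * sin (μ * v / 2 - c) ^ 2))) v := by
  have hφ : HasDerivAt (fun v => μ * v / 2 - c) (μ / 2) v := by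
    simpa using (((hasDerivAt_id v).const_mul μ).div_const 2).sub_const c
  refine ((((hasDerivAt_ellipticF hk _).comp v hφ).const_mul a).add
    (((hasDerivAt_ellipticE k _).comp v hφ).const_mul b)).congr_deriv ?_
  ring

lemma sqrt_one_sub_sq_mul_sin_sq_half_sub_pi_div_four {k β δ γ : ℝ} (hγ : 0 < γ)
    (hk : k ^ 2 * γ ^ 2 = 2 * β) (hδ : γ ^ 2 = β + δ) (t : ℝ) :
    √(1 - k ^ 2 * sin (t / 2 - π / 4) ^ 2) = √(β * sin t + δ) / γ := by
  rw [← sqrt_sq hγ.le, ← sqrt_div' _ (sq_nonneg γ), sin_sq_half_sub_pi_div_four]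
  congr 1
  field_simp
  linear_combination (sin t - 1) * hk + 2 * hδ

lemma unduloid_speed_sq {α γ μ β δ s c w : ℝ} (hγ : γ ≠ 0) (hw : w ≠ 0)
    (hβδ : δ ^ 2 - β ^ 2 = (α * γ) ^ 2) (hμ : μ ^ 2 * (α * γ + δ) = 2)
    (hsc : s ^ 2 + c ^ 2 = 1) (hw2 : w ^ 2 = β * s + δ) :
    (β * μ * c / (2 * w)) ^ 2 + (μ / 2 * (α / (w / γ) + γ * (w / γ))) ^ 2 = 1 := by
  have key : β ^ 2 * c ^ 2 + (α * γ + w ^ 2) ^ 2 = 2 * (α * γ + δ) * w ^ 2 := by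
    linear_combination β ^ 2 * hsc + (w ^ 2 + β * s - δ) * hw2 - hβδ
  calc (β * μ * c / (2 * w)) ^ 2 + (μ / 2 * (α / (w / γ) + γ * (w / γ))) ^ 2
      = (μ / (2 * w)) ^ 2 * (β ^ 2 * c ^ 2 + (α * γ + w ^ 2) ^ 2) := by field_simp
    _ = μ ^ 2 * (α * γ + δ) / 2 := by rw [key]; field_simp
    _ = 1 := by rw [hμ]; norm_num

/-- In the unduloid setup with parameters `0 < α < γ`, the functions `x` and `z` are
differentiable on ℝ and the generating curve is parametrized by arc length:
`x'(v)² + z'(v)² = 1` for every `v`. -/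
theorem statement_9 (α γ : ℝ) (hα : 0 < α) (hαγ : α < γ)
    (μ β δ k : ℝ) (hμ : μ = 2 / (α + γ)) (hβ : β = (γ ^ 2 - α ^ 2) / 2)
    (hδ : δ = (γ ^ 2 + α ^ 2) / 2) (hk : k = Real.sqrt (γ ^ 2 - α ^ 2) / γ)
    (x z : ℝ → ℝ)
    (hx : ∀ v, x v = Real.sqrt (β * Real.sin (μ * v) + δ))
    (hz : ∀ v, z v = α * ellipticF k (μ * v / 2 - Real.pi / 4) +
      γ * ellipticE k (μ * v / 2 - Real.pi / 4)) :
    Differentiable ℝ x ∧ Differentiable ℝ z ∧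
      ∀ v : ℝ, (deriv x v) ^ 2 + (deriv z v) ^ 2 = 1 := by
  have hγ : 0 < γ := hα.trans hαγ
  have hk2 : k ^ 2 * γ ^ 2 = 2 * β := by
    rw [hk, div_pow, sq_sqrt (by nlinarith), hβ]
    field_simp
  have hk1 : k ^ 2 < 1 := by nlinarith
  have hβδ : |β| < δ := by
    rw [abs_lt, hβ, hδ]
    constructor <;> nlinarith
  have hγβδ : γ ^ 2 = β + δ := by rw [hβ, hδ]; ring
  have hδβ : δ ^ 2 - β ^ 2 = (α * γ) ^ 2 := by rw [hβ, hδ]; ring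
  have hμδ : μ ^ 2 * (α * γ + δ) = 2 := by
    rw [hμ, hδ]
    field_simp
    ring
  obtain rfl : x = _ := funext hx
  obtain rfl : z = _ := funext hz
  have hx' := hasDerivAt_sqrt_mul_sin_add hβδ μ
  have hz' := hasDerivAt_elliptic_combination hk1 α γ μ (π / 4)
  refine ⟨fun v => (hx' v).differentiableAt, fun v => (hz' v).differentiableAt, fun v => ?_⟩
  have hw := mul_sin_add_pos hβδ (μ * v)
  rw [(hx' v).deriv, (hz' v).deriv,
    sqrt_one_sub_sq_mul_sin_sq_half_sub_pi_div_four hγ hk2 hγβδ]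
  exact unduloid_speed_sq hγ.ne' (sqrt_pos.mpr hw).ne' hδβ hμδ (sin_sq_add_cos_sq _) (sq_sqrt hw.le)
end
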